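/- PEU is at most SWU: for any sequence t and q-sequence S with t ⊑ S, PEU(t,S) ≤ u(S), and hence PEU(t,D) ≤ SWU(t,D) for any database D. -/

import Mathlib

open scoped BigOperators

attribute [local instance] Classical.propDecidable

noncomputable section

abbrev Item := ℕ
abbrev QItemset := Item →₀ ℝ
abbrev QSeq := List QItemset
abbrev Pattern := List (Finset Item)
abbrev DB := Finset QSeq

/-- All item utilities of `S` are nonnegative. -/
def NonNegS (S : QSeq) : Prop := ∀ E ∈ S, ∀ i : Item, 0 ≤ E i

/-- Utility of an itemset `e` inside a q-itemset `E`. -/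
def itemsetUtil (e : Finset Item) (E : QItemset) : ℝ := ∑ i ∈ e, E i

/-- Total utility `u(S)` of a q-sequence. -/
def seqUtil (S : QSeq) : ℝ := (S.map fun E => ∑ i ∈ E.support, E i).sum

/-- `js` is the (0-based) position list of an instance of pattern `t` in `S`. -/
def IsInstance (t : Pattern) (S : QSeq) (js : List ℕ) : Prop :=
  js.length = t.length ∧ js.Pairwise (· < ·) ∧ (∀ j ∈ js, j < S.length) ∧
    ∀ p ∈ js.zip t, p.2 ⊆ (S.getD p.1 0).support

/-- Utility of the instance of `t` at positions `js` in `S`. -/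
def instUtil (t : Pattern) (S : QSeq) (js : List ℕ) : ℝ :=
  ((js.zip t).map fun p => itemsetUtil p.2 (S.getD p.1 0)).sum

/-- `t ⊑ S`. -/
def Contains (t : Pattern) (S : QSeq) : Prop := ∃ js, IsInstance t S js

/-- `u(t,S)`: maximum instance utility of `t` in `S`. -/
def patUtilS (t : Pattern) (S : QSeq) : ℝ :=
  sSup {x | ∃ js, IsInstance t S js ∧ x = instUtil t S js}

/-- `u(t,D)`. -/
def patUtilD (t : Pattern) (D : DB) : ℝ :=
  ∑ S ∈ D, if Contains t S then patUtilS t S else 0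

/-- `p` is an extension position of `t` in `S`. -/
def IsExtPos (t : Pattern) (S : QSeq) (p : ℕ) : Prop :=
  ∃ js, IsInstance t S js ∧ js.getLast? = some p

/-- `u(t,p,S)`: maximum instance utility among instances with extension position `p`. -/
def patUtilP (t : Pattern) (S : QSeq) (p : ℕ) : ℝ :=
  sSup {x | ∃ js, IsInstance t S js ∧ js.getLast? = some p ∧ x = instUtil t S js}

/-- The utilities of the items of `S`, flattened in order (items within an
itemset sorted alphabetically). -/
def flatUtils (S : QSeq) : List ℝ :=
  (S.map fun E => (E.support.sort (· ≤ ·)).map fun i => E i).flatten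

/-- `u(S/_m)`: utility of the remaining q-sequence after (1-based) flattened index `m`. -/
def remUtil (S : QSeq) (m : ℕ) : ℝ := ((flatUtils S).drop m).sum

/-- The extension item of a pattern: the last item of its last itemset. -/
def extItem (t : Pattern) : Item := WithBot.unbotD 0 (t.getLastD ∅).max

/-- 1-based flattened index of item `i` placed in itemset number `p` of `S`. -/
def flatIdx (S : QSeq) (p : ℕ) (i : Item) : ℕ :=
  ((S.take p).map fun E => E.support.card).sum +
    ((S.getD p 0).support.sort (· ≤ ·)).idxOf i + 1

/-- `I(t,p)`: flattened index of the extension item of `t` at extension position `p`. -/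
def extIdx (t : Pattern) (S : QSeq) (p : ℕ) : ℕ := flatIdx S p (extItem t)

/-- `PEU(t,p,S)`. -/
def peuP (t : Pattern) (S : QSeq) (p : ℕ) : ℝ :=
  if 0 ≤ remUtil S (extIdx t S p) then patUtilP t S p + remUtil S (extIdx t S p) else 0

/-- `PEU(t,S)`; by convention `PEU(⟨⟩,S) = u(S)`. -/
def peu (t : Pattern) (S : QSeq) : ℝ :=
  if t = [] then seqUtil S
  else sSup {x | ∃ p, IsExtPos t S p ∧ x = peuP t S p}

/-- `PEU(t,D)`. -/
def peuD (t : Pattern) (D : DB) : ℝ :=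
  ∑ S ∈ D, if Contains t S then peu t S else 0

/-- S-Extension: `t ⋄ₛ w`. -/
def sExt (t w : Pattern) : Pattern := t ++ w

/-- I-Extension: `t ⋄ᵢ w`. -/
def iExt (t w : Pattern) : Pattern :=
  t.dropLast ++ [t.getLastD ∅ ∪ w.headD ∅] ++ w.tail

/-- Precondition for I-Extension: every item of the last itemset of `t`
precedes every item of the first itemset of `w`. -/
def IExtOK (t w : Pattern) : Prop :=
  t ≠ [] ∧ w ≠ [] ∧ ∀ i ∈ t.getLastD ∅, ∀ i' ∈ w.headD ∅, i < i'

/-- `t'` is an extension of `t` by a nonempty sequence `w` (I- or S-Extension). -/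
def IsExt (t t' : Pattern) : Prop :=
  ∃ w, w ≠ [] ∧ (t' = sExt t w ∨ (IExtOK t w ∧ t' = iExt t w))

/-- `t' = t ⋄ w` with `w` possibly empty. -/
def IsExtOrEq (t t' : Pattern) : Prop := t' = t ∨ IsExt t t'

/-- `t = tp ⋄ i`, a one-item extension. -/
def IsOneItemExt (tp t : Pattern) (i : Item) : Prop :=
  t = sExt tp [{i}] ∨ (IExtOK tp [{i}] ∧ t = iExt tp [{i}])

/-- `RSU(t,S)` where `tp` is the one-item-shorter prefix of `t`. -/
def rsuS (tp t : Pattern) (S : QSeq) : ℝ :=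
  if Contains t S then peu tp S else 0

/-- `RSU(t,D)`. -/
def rsuD (tp t : Pattern) (D : DB) : ℝ := ∑ S ∈ D, rsuS tp t S

/-- First (smallest) extension position of `t` in `S`. -/
def firstExtPos (t : Pattern) (S : QSeq) : ℕ := sInf {p | IsExtPos t S p}

/-- `TRSU(t,S)` where `tp` is the one-item-shorter prefix of `t`. -/
def trsuS (tp t : Pattern) (S : QSeq) : ℝ :=
  if Contains t S then
    if peu tp S = patUtilP tp S (firstExtPos tp S)
        + remUtil S (extIdx tp S (firstExtPos tp S)) then
      peu tp S -
        (remUtil S (extIdx tp S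
            (sSup {p | IsExtPos tp S p ∧ p ≤ firstExtPos t S})) -
         remUtil S (extIdx t S (firstExtPos t S) - 1))
    else rsuS tp t S
  else 0

/-- `TRSU(t,D)`. -/
def trsuD (tp t : Pattern) (D : DB) : ℝ := ∑ S ∈ D, trsuS tp t S

/-- `SWU(t,D)`. -/
def swu (t : Pattern) (D : DB) : ℝ :=
  ∑ S ∈ D, if Contains t S then seqUtil S else 0

/-- Pattern-level containment `t ⊑ t'`. -/
def PatSub (t t' : Pattern) : Prop :=
  ∃ js : List ℕ, js.length = t.length ∧ js.Pairwise (· < ·) ∧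
    (∀ j ∈ js, j < t'.length) ∧ ∀ p ∈ js.zip t, p.2 ⊆ t'.getD p.1 ∅

lemma List.mem_take_idxOf_succ_of_le {α : Type*} [LinearOrder α] [BEq α] [LawfulBEq α]
    {l : List α} (hl : l.Pairwise (· < ·)) {i a : α} (hi : i ∈ l) (hia : i ≤ a) :
    i ∈ l.take (l.idxOf a + 1) := by
  obtain ⟨m, hm, rfl⟩ := List.getElem_of_mem hi
  have hma : m ≤ l.idxOf a := by
    by_contra! h
    have ha : l.idxOf a < l.length := by omega
    have hlt := List.pairwise_iff_getElem.1 hl _ _ ha hm h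
    rw [List.getElem_idxOf] at hlt
    exact absurd hia (not_le.2 hlt)
  rw [List.mem_iff_getElem]
  exact ⟨m, by rw [List.length_take]; omega, List.getElem_take⟩

lemma Finset.le_unbotD_max {α : Type*} [LinearOrder α] {s : Finset α} {i : α} (hi : i ∈ s)
    (d : α) : i ≤ s.max.unbotD d :=
  (WithBot.le_unbotD_iff (ne_bot_of_le_ne_bot WithBot.coe_ne_bot (Finset.le_max hi))).2
    (Finset.le_max hi)

lemma getD_apply_nonneg {S : QSeq} (hS : NonNegS S) (m : ℕ) (i : Item) : 0 ≤ S.getD m 0 i := by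
  rcases lt_or_ge m S.length with h | h
  · rw [List.getD_eq_getElem _ _ h]
    exact hS _ (List.getElem_mem h) i
  · rw [List.getD_eq_default _ _ h]
    simp

lemma flatUtils_cons (E : QItemset) (S : QSeq) :
    flatUtils (E :: S) = ((E.support.sort (· ≤ ·)).map fun i => E i) ++ flatUtils S := rfl

lemma flatUtils_append (S₁ S₂ : QSeq) :
    flatUtils (S₁ ++ S₂) = flatUtils S₁ ++ flatUtils S₂ := by
  simp only [flatUtils, List.map_append, List.flatten_append]

lemma length_flatUtils (S : QSeq) :
    (flatUtils S).length = (S.map fun E => E.support.card).sum := by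
  simp [flatUtils, List.length_flatten, Function.comp_def]

lemma sum_map_sort_support (E : QItemset) :
    ((E.support.sort (· ≤ ·)).map fun i => E i).sum = ∑ i ∈ E.support, E i :=
  (((Finset.sort_perm_toList _ _).map _).sum_eq).trans (Finset.sum_map_toList _ _)

lemma sum_flatUtils (S : QSeq) : (flatUtils S).sum = seqUtil S := by
  simp only [flatUtils, seqUtil, List.sum_flatten, List.map_map, Function.comp_def,
    sum_map_sort_support]

lemma flatUtils_nonneg {S : QSeq} (hS : NonNegS S) : ∀ x ∈ flatUtils S, 0 ≤ x := by
  intro x hx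
  simp only [flatUtils, List.mem_flatten, List.mem_map] at hx
  obtain ⟨_, ⟨E, hE, rfl⟩, hx⟩ := hx
  obtain ⟨i, -, rfl⟩ := List.mem_map.1 hx
  exact hS E hE i

lemma seqUtil_nonneg {S : QSeq} (hS : NonNegS S) : 0 ≤ seqUtil S :=
  sum_flatUtils S ▸ List.sum_nonneg (flatUtils_nonneg hS)

lemma remUtil_le_seqUtil {S : QSeq} (hS : NonNegS S) (m : ℕ) : remUtil S m ≤ seqUtil S := by
  rw [remUtil, ← sum_flatUtils, ← List.sum_take_add_sum_drop (flatUtils S) m]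
  have : 0 ≤ ((flatUtils S).take m).sum :=
    List.sum_nonneg fun x hx => flatUtils_nonneg hS x (List.mem_of_mem_take hx)
  linarith

lemma seqUtil_take (S : QSeq) (p : ℕ) :
    seqUtil (S.take p) =
      ∑ m ∈ Finset.range p, ∑ i ∈ (S.getD m 0).support, S.getD m 0 i := by
  induction S generalizing p with
  | nil => simp [seqUtil]
  | cons E S ih =>
    cases p with
    | zero => simp [seqUtil]
    | succ p =>
      simp only [Finset.sum_range_succ', List.take_succ_cons, List.getD_cons_succ,
        List.getD_cons_zero, ← ih]
      simp [seqUtil, add_comm]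

lemma flatIdx_eq (S : QSeq) (p : ℕ) (i : Item) :
    flatIdx S p i =
      (flatUtils (S.take p)).length + (((S.getD p 0).support.sort (· ≤ ·)).idxOf i + 1) := by
  rw [flatIdx, length_flatUtils, add_assoc]

lemma extIdx_append_singleton (t : Pattern) (e : Finset Item) (S : QSeq) (p : ℕ) :
    extIdx (t ++ [e]) S p = flatIdx S p (e.max.unbotD 0) := by
  simp [extIdx, extItem]

lemma instUtil_append_singleton {t : Pattern} {S : QSeq} {js : List ℕ}
    (hlen : js.length = t.length) (e : Finset Item) (p : ℕ) :
    instUtil (t ++ [e]) S (js ++ [p]) = instUtil t S js + itemsetUtil e (S.getD p 0) := by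
  simp [instUtil, List.zip_append hlen]

lemma instUtil_le_seqUtil_take {S : QSeq} (hS : NonNegS S) {t : Pattern} {js : List ℕ} {p : ℕ}
    (hlen : js.length ≤ t.length) (hnd : js.Nodup) (hjs : ∀ j ∈ js, j < p)
    (hsub : ∀ q ∈ js.zip t, q.2 ⊆ (S.getD q.1 0).support) :
    instUtil t S js ≤ seqUtil (S.take p) := by
  set u : ℕ → ℝ := fun m => ∑ i ∈ (S.getD m 0).support, S.getD m 0 i
  calc instUtil t S js ≤ ((js.zip t).map fun q => u q.1).sum :=
        List.sum_le_sum fun q hq => Finset.sum_le_sum_of_subset_of_nonneg (hsub q hq)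
          fun i _ _ => getD_apply_nonneg hS _ i
    _ = (((js.zip t).map Prod.fst).map u).sum := by rw [List.map_map]; rfl
    _ = (js.map u).sum := by rw [List.map_fst_zip hlen]
    _ = ∑ j ∈ js.toFinset, u j := (List.sum_toFinset _ hnd).symm
    _ ≤ ∑ m ∈ Finset.range p, u m :=
        Finset.sum_le_sum_of_subset_of_nonneg
          (fun j hj => Finset.mem_range.2 (hjs j (List.mem_toFinset.1 hj)))
          fun m _ _ => Finset.sum_nonneg fun i _ => getD_apply_nonneg hS m i
    _ = seqUtil (S.take p) := (seqUtil_take S p).symm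

lemma itemsetUtil_le_sum_take_idxOf {E : QItemset} (hE : ∀ i, 0 ≤ E i) {e : Finset Item}
    (hsub : e ⊆ E.support) {a : Item} (hle : ∀ i ∈ e, i ≤ a) :
    itemsetUtil e E ≤ (((E.support.sort (· ≤ ·)).take
      ((E.support.sort (· ≤ ·)).idxOf a + 1)).map fun i => E i).sum := by
  rw [← List.sum_toFinset _ ((List.take_sublist _ _).nodup (Finset.sort_nodup _ _))]
  refine Finset.sum_le_sum_of_subset_of_nonneg (fun i hi => List.mem_toFinset.2 ?_)
    fun i _ _ => hE i
  exact List.mem_take_idxOf_succ_of_le (Finset.sortedLT_sort _).pairwise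
    ((Finset.mem_sort _).2 (hsub hi)) (hle i hi)

lemma seqUtil_take_add_le_sum_take_flatUtils {S : QSeq} (hS : NonNegS S) {p : ℕ}
    (hp : p < S.length) (k : ℕ) :
    seqUtil (S.take p) +
        ((((S.getD p 0).support.sort (· ≤ ·)).take k).map fun i => S.getD p 0 i).sum
      ≤ ((flatUtils S).take ((flatUtils (S.take p)).length + k)).sum := by
  set E := S.getD p 0 with hE
  set R := flatUtils (S.drop (p + 1))
  have hsplit : flatUtils S
      = flatUtils (S.take p) ++ (((E.support.sort (· ≤ ·)).map fun i => E i) ++ R) := by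
    conv_lhs => rw [← List.take_append_drop p S, List.drop_eq_getElem_cons hp]
    rw [flatUtils_append, flatUtils_cons, hE, List.getD_eq_getElem _ _ hp]
  have hR : 0 ≤ (R.take (k - (E.support.sort (· ≤ ·)).length)).sum :=
    List.sum_nonneg fun x hx =>
      flatUtils_nonneg (fun F hF => hS F (List.mem_of_mem_drop hF)) x (List.mem_of_mem_take hx)
  rw [hsplit, List.take_length_add_append, List.take_append, List.sum_append, List.sum_append,
    List.length_map, sum_flatUtils, List.map_take]
  linarith

/-- The items of an instance ending at `p` all sit at flattened indices `≤ I(t,p)`, so its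
utility and `u(S/_{I(t,p)})` are sums over disjoint parts of the flattened sequence. -/
lemma instUtil_add_remUtil_le_seqUtil {t : Pattern} {S : QSeq} {js : List ℕ} {p : ℕ}
    (hS : NonNegS S) (hins : IsInstance t S js) (hlast : js.getLast? = some p) :
    instUtil t S js + remUtil S (extIdx t S p) ≤ seqUtil S := by
  obtain ⟨js, rfl⟩ := List.getLast?_eq_some_iff.1 hlast
  obtain ⟨hlen, hsort, hbound, hsub⟩ := hins
  obtain rfl | ⟨t, e, rfl⟩ := t.eq_nil_or_concat'
  · simp at hlen
  have hlen' : js.length = t.length := by simpa using hlen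
  rw [List.zip_append hlen'] at hsub
  rw [List.pairwise_append] at hsort
  set E := S.getD p 0
  set k := (E.support.sort (· ≤ ·)).idxOf (e.max.unbotD 0) + 1
  have hidx : extIdx (t ++ [e]) S p = (flatUtils (S.take p)).length + k := by
    rw [extIdx_append_singleton, flatIdx_eq]
  have hprefix : instUtil t S js ≤ seqUtil (S.take p) :=
    instUtil_le_seqUtil_take hS hlen'.le (hsort.1.imp ne_of_lt)
      (fun j hj => hsort.2.2 j hj p (List.mem_singleton_self p))
      fun q hq => hsub q (List.mem_append_left _ hq)
  have hfinal : itemsetUtil e E ≤ (((E.support.sort (· ≤ ·)).take k).map fun i => E i).sum :=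
    itemsetUtil_le_sum_take_idxOf (getD_apply_nonneg hS p) (hsub (p, e) (by simp))
      fun i hi => Finset.le_unbotD_max hi 0
  have htake := seqUtil_take_add_le_sum_take_flatUtils hS (hbound p (by simp)) k
  rw [instUtil_append_singleton hlen', hidx, remUtil, ← sum_flatUtils,
    ← List.sum_take_add_sum_drop (flatUtils S) ((flatUtils (S.take p)).length + k)]
  linarith

lemma patUtilP_add_remUtil_le_seqUtil {S : QSeq} (hS : NonNegS S) (t : Pattern) (p : ℕ) :
    patUtilP t S p + remUtil S (extIdx t S p) ≤ seqUtil S := by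
  have hrem := remUtil_le_seqUtil hS (extIdx t S p)
  suffices patUtilP t S p ≤ seqUtil S - remUtil S (extIdx t S p) by linarith
  refine Real.sSup_le ?_ (by linarith)
  rintro _ ⟨js, hins, hlast, rfl⟩
  linarith [instUtil_add_remUtil_le_seqUtil hS hins hlast]

lemma peuP_le_seqUtil {S : QSeq} (hS : NonNegS S) (t : Pattern) (p : ℕ) :
    peuP t S p ≤ seqUtil S := by
  rw [peuP]
  split_ifs
  · exact patUtilP_add_remUtil_le_seqUtil hS t p
  · exact seqUtil_nonneg hS

lemma peu_le_seqUtil {S : QSeq} (hS : NonNegS S) (t : Pattern) : peu t S ≤ seqUtil S := by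
  rw [peu]
  split_ifs
  · exact le_rfl
  · refine Real.sSup_le ?_ (seqUtil_nonneg hS)
    rintro _ ⟨p, -, rfl⟩
    exact peuP_le_seqUtil hS t p

/-- PEU is at most SWU: `PEU(t,S) ≤ u(S)` whenever `t ⊑ S`, and
hence `PEU(t,D) ≤ SWU(t,D)`. -/
theorem peu_le_seqUtil_and_peuD_le_swu (t : Pattern) :
    (∀ S : QSeq, NonNegS S → Contains t S → peu t S ≤ seqUtil S) ∧
      ∀ D : DB, (∀ S ∈ D, NonNegS S) → peuD t D ≤ swu t D := by
  refine ⟨fun S hS _ => peu_le_seqUtil hS t, fun D hD => Finset.sum_le_sum fun S hSD => ?_⟩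
  split_ifs
  · exact peu_le_seqUtil (hD S hSD) t
  · exact le_rfl
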